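/- Overall correctness of compilation: in a program over finite algebraic data types all of whose functions are total, every expression p of the input language is compiled correctly, i.e. for every abstract environment e and every assignment σ: decode(avalue(e, compile(p)), σ) = cvalue(decode(e,σ), p). -/

import Mathlib

/-- Abstract values over propositional variables `V`: a list of (semantic) formulas
(the *flags*) together with a list of abstract values (the *arguments*). -/
inductive AVal (V : Type) : Type where
  | mk : List ((V → Bool) → Bool) → List (AVal V) → AVal V

/-- The flags of an abstract value. -/
def AVal.flags {V : Type} : AVal V → List ((V → Bool) → Bool)
  | .mk f _ => f

/-- The arguments of an abstract value. -/
def AVal.args {V : Type} : AVal V → List (AVal V)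
  | .mk _ a => a

/-- A signature: every type symbol `T` gets a nonempty finite list of constructors,
each given by its finite list of argument type symbols. -/
structure Signature (τ : Type) where
  ctors : τ → List (List τ)
  ctors_ne : ∀ T, ctors T ≠ []

/-- Untyped data terms; the first component is the (1-based) rank of the
constructor. -/
inductive Value : Type where
  | mk : ℕ → List Value → Value

/-- Well-typed concrete values of type `T`: `C_i(v_1, …, v_n)` where `C_i` is the
`i`-th constructor of `T` with argument types `T_1, …, T_n` and each `v_j` is a
well-typed value of type `T_j`. -/
inductive WT {τ : Type} (sig : Signature τ) : τ → Value → Prop where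
  | mk {T : τ} {i : ℕ} {argTys : List τ} {vals : List Value} :
      1 ≤ i → (sig.ctors T)[i - 1]? = some argTys →
      List.Forall₂ (WT sig) argTys vals → WT sig T (.mk i vals)

/-- `numeric n w = some i` iff `w` has a (unique) prefix `u ∈ S n` of lexicographic
rank `i` in `S n`; extra bits beyond the prefix are ignored. -/
def numeric : ℕ → List Bool → Option ℕ
  | 0, _ => none
  | 1, _ => some 1
  | _ + 2, [] => none
  | n + 2, false :: w => numeric ((n + 2 + 1) / 2) w
  | n + 2, true :: w => (numeric ((n + 2) / 2) w).map (fun i => (n + 2 + 1) / 2 + i)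
termination_by n _ => n
decreasing_by all_goals omega

/-- `strOf n i` is the element of `S n` of lexicographic rank `i` (for `1 ≤ i ≤ n`). -/
def strOf : ℕ → ℕ → List Bool
  | 0, _ => []
  | 1, _ => []
  | n + 2, i =>
      if i ≤ (n + 2 + 1) / 2 then false :: strOf ((n + 2 + 1) / 2) i
      else true :: strOf ((n + 2) / 2) (i - (n + 2 + 1) / 2)
termination_by n _ => n
decreasing_by all_goals omega
mutual
  /-- Encoding of a concrete value of type `T` as an abstract value: the flags are
  constant formulas representing the rank-`i` element of `S c(T)`, and the arguments
  are the encodings of the constructor arguments at their respective types. -/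
  def encode {V τ : Type} (sig : Signature τ) : τ → Value → AVal V
    | T, .mk i vals =>
        .mk ((strOf (sig.ctors T).length i).map (fun b => fun _ => b))
          (encodeList sig ((sig.ctors T).getD (i - 1) []) vals)
  termination_by _ v => sizeOf v

  /-- Pointwise encoding of a list of values at a list of types. -/
  def encodeList {V τ : Type} (sig : Signature τ) : List τ → List Value → List (AVal V)
    | t :: ts, v :: vs => encode sig t v :: encodeList sig ts vs
    | _, _ => []
  termination_by _ vs => sizeOf vs
end

mutual
  /-- Decoding of an abstract value at type `T` under an assignment `σ` (a partial
  function): the flags are evaluated under `σ`; if the resulting bit string has a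
  prefix in `S c(T)` determining constructor rank `i` of `T`, and there are enough
  arguments, the first arguments are decoded at the argument types of the `i`-th
  constructor of `T`; otherwise decoding is undefined. -/
  def decode {V τ : Type} (sig : Signature τ) : τ → AVal V → (V → Bool) → Option Value
    | T, .mk flags args, σ =>
        match numeric (sig.ctors T).length (flags.map (fun f => f σ)) with
        | none => none
        | some i =>
            match (sig.ctors T)[i - 1]? with
            | none => none
            | some argTys =>
                if argTys.length ≤ args.length then
                  (decodeList sig argTys args σ).map (Value.mk i)
                else none
  termination_by _ a _ => sizeOf a

  /-- Pointwise decoding of (a prefix of) a list of abstract values at a list of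
  types. -/
  def decodeList {V τ : Type} (sig : Signature τ) :
      List τ → List (AVal V) → (V → Bool) → Option (List Value)
    | [], _, _ => some []
    | _ :: _, [], _ => none
    | t :: ts, a :: as, σ =>
        match decode sig t a σ with
        | none => none
        | some v => (decodeList sig ts as σ).map (fun vs => v :: vs)
  termination_by _ as _ => sizeOf as
end
lemma AVal.one_le_sizeOf_list {V : Type} (l : List (AVal V)) : 1 ≤ sizeOf l := by
  cases l <;> simp <;> omega

lemma AVal.sizeOf_getD_le {V : Type} (a : AVal V) (j : ℕ) :
    sizeOf (a.args.getD j (AVal.mk [] [])) ≤ sizeOf a := by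
  cases a with
  | mk f args =>
      simp only [AVal.args]
      by_cases h : j < args.length
      · have hm : args.getD j (AVal.mk [] []) ∈ args := by
          rw [List.getD_eq_getElem _ _ h]; exact List.getElem_mem h
        have := List.sizeOf_lt_of_mem hm
        simp only [AVal.mk.sizeOf_spec]
        have := AVal.one_le_sizeOf_list (V := V) []
        omega
      · rw [List.getD_eq_default _ _ (by omega)]
        simp only [AVal.mk.sizeOf_spec]
        have h1 : 1 ≤ sizeOf f := by cases f <;> simp <;> omega
        have h2 := AVal.one_le_sizeOf_list args
        have h3 := AVal.one_le_sizeOf_list (V := V) []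
        simp at h3 ⊢
        omega

lemma AVal.sizeOf_getD_lt {V : Type} (a : AVal V) (j : ℕ) (h : j < a.args.length) :
    sizeOf (a.args.getD j (AVal.mk [] [])) < sizeOf a := by
  cases a with
  | mk f args =>
      simp only [AVal.args] at h ⊢
      have hm : args.getD j (AVal.mk [] []) ∈ args := by
        rw [List.getD_eq_getElem _ _ h]; exact List.getElem_mem h
      have := List.sizeOf_lt_of_mem hm
      simp only [AVal.mk.sizeOf_spec]
      omega

lemma merge_dec {V : Type} (as : List (AVal V)) (j : ℕ)
    (hj : j < (as.map (fun a => a.args.length)).foldr max 0) :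
    sizeOf (as.map (fun a => a.args.getD j (AVal.mk [] []))) < sizeOf as := by
  induction as with
  | nil => simp at hj
  | cons a as ih =>
      simp only [List.map_cons, List.foldr_cons] at hj
      simp only [List.map_cons, List.cons.sizeOf_spec]
      rcases Nat.lt_or_ge j a.args.length with h | h
      · have h1 := AVal.sizeOf_getD_lt a j h
        have h2 : sizeOf (as.map (fun a => a.args.getD j (AVal.mk [] []))) ≤ sizeOf as := by
          rcases Nat.lt_or_ge j ((as.map (fun a => a.args.length)).foldr max 0) with h' | h'
          · exact Nat.le_of_lt (ih h')
          · clear ih hj; induction as with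
            | nil => simp
            | cons b bs ihb =>
                simp only [List.map_cons, List.foldr_cons] at h' ⊢
                simp only [List.cons.sizeOf_spec]
                have := AVal.sizeOf_getD_le b j
                have := ihb (by omega)
                omega
        omega
      · have hj' : j < (as.map (fun a => a.args.length)).foldr max 0 := by omega
        have := ih hj'
        have := AVal.sizeOf_getD_le a j
        omega

/-- The combining function `merge c f⃗ [a_1, …, a_c]`: its `i`-th flag is the
conjunction over `k` of the implications `numeric c f⃗ = k ⟹ flags_i(a_k)`, and its
`j`-th argument is `merge c f⃗` of the `j`-th arguments of the `a_k` (a missing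
argument being the empty abstract value). -/
def merge {V : Type} (c : ℕ) (fs : List ((V → Bool) → Bool)) (as : List (AVal V)) :
    AVal V :=
  AVal.mk
    ((List.range ((as.map (fun a => a.flags.length)).foldr max 0)).map
      (fun i => fun σ =>
        match numeric c (fs.map (fun f => f σ)) with
        | none => true
        | some k =>
            match as[k - 1]? with
            | none => true
            | some a =>
                match a.flags[i]? with
                | none => true
                | some g => g σ))
    ((List.range ((as.map (fun a => a.args.length)).foldr max 0)).attach.map
      (fun j => merge c fs (as.map (fun a => a.args.getD j.1 (AVal.mk [] [])))))
termination_by sizeOf as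
decreasing_by
  have h := merge_dec as j.1 (by simpa using j.2)
  simpa [List.map_attach_eq_pmap] using h

/-- Expressions of the input language: variables, local bindings, calls of globally
defined functions, constructor applications (the constructor given by its type symbol
and its 1-based rank), and complete pattern matches (one branch, consisting of the
pattern variables and the branch body, per constructor of the discriminant's type). -/
inductive Expr (τ Name FName : Type) : Type where
  | var : Name → Expr τ Name FName
  | lett : Name → Expr τ Name FName → Expr τ Name FName → Expr τ Name FName
  | call : FName → List (Expr τ Name FName) → Expr τ Name FName
  | con : τ → ℕ → List (Expr τ Name FName) → Expr τ Name FName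
  | cases : τ → Expr τ Name FName → List (List Name × Expr τ Name FName) →
      Expr τ Name FName

/-- Expressions of the abstract (compiled) language: variables, local bindings,
calls, abstract constructor applications `C'` (given the number `c` of constructors
of the type and the rank `i` of the constructor), and the compiled form of pattern
matches: `amerge c d bs` evaluates `d` to an abstract value `x`, evaluates each
branch body with the pattern variables bound to the arguments of `x`, and merges the
results according to the flags of `x`. -/
inductive AExpr (Name FName V : Type) : Type where
  | var : Name → AExpr Name FName V
  | lett : Name → AExpr Name FName V → AExpr Name FName V → AExpr Name FName V
  | call : FName → List (AExpr Name FName V) → AExpr Name FName V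
  | mkCon : ℕ → ℕ → List (AExpr Name FName V) → AExpr Name FName V
  | amerge : ℕ → AExpr Name FName V → List (List Name × AExpr Name FName V) →
      AExpr Name FName V

lemma sizeOf_snd_lt_of_mem {Name E : Type} [SizeOf Name] [SizeOf E]
    {bs : List (List Name × E)} {b : List Name × E} (h : b ∈ bs) :
    sizeOf b.2 < sizeOf bs := by
  have h1 := List.sizeOf_lt_of_mem h
  obtain ⟨vs, body⟩ := b
  simp at h1 ⊢
  omega

/-- Compilation of input expressions to abstract expressions. -/
def compile {τ Name FName V : Type} (sig : Signature τ) :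
    Expr τ Name FName → AExpr Name FName V
  | .var x => .var x
  | .lett x a b => .lett x (compile sig a) (compile sig b)
  | .call f as => .call f (as.attach.map (fun e => compile sig e.1))
  | .con T i as => .mkCon (sig.ctors T).length i (as.attach.map (fun e => compile sig e.1))
  | .cases T d bs =>
      .amerge (sig.ctors T).length (compile sig d)
        (bs.attach.map (fun b => (b.1.1, compile sig b.1.2)))
termination_by e => sizeOf e
decreasing_by
  all_goals simp only [Expr.lett.sizeOf_spec, Expr.call.sizeOf_spec,
    Expr.con.sizeOf_spec, Expr.cases.sizeOf_spec]
  · omega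
  · omega
  · have h := List.sizeOf_lt_of_mem e.2; omega
  · have h := List.sizeOf_lt_of_mem e.2; omega
  · omega
  · have h := sizeOf_snd_lt_of_mem b.2; omega

/-- `updEnv env x v` updates the environment `env` at `x` by `v`. -/
def updEnv {Name β : Type} [DecidableEq Name] (env : Name → Option β) (x : Name)
    (v : β) : Name → Option β :=
  fun y => if y = x then some v else env y

/-- The environment binding a list of names pointwise to a list of values
(and nothing else). -/
def bindEnv {Name β : Type} [DecidableEq Name] : List Name → List β → Name → Option β
  | p :: ps, v :: vs, y => if y = p then some v else bindEnv ps vs y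
  | _, _, _ => none

/-- `extEnv vs ws env` extends `env` by binding the names `vs` pointwise
to the values `ws`. -/
def extEnv {Name β : Type} [DecidableEq Name] (vs : List Name) (ws : List β)
    (env : Name → Option β) : Name → Option β :=
  fun y => match bindEnv vs ws y with
    | some v => some v
    | none => env y

/- Strict (call-by-value) big-step evaluation of input expressions with respect to a
program `prog` assigning to (some) function names their formal parameters and body.
In a pattern match, the branch corresponding to the constructor of the discriminant's
value is chosen, with the pattern variables bound to the constructor arguments.
`CEvalList` is the pointwise lifting of `CEval` to lists of expressions. -/
mutual
  /-- Big-step evaluation of input expressions. -/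
  inductive CEval {τ Name FName : Type} [DecidableEq Name]
      (prog : FName → Option (List Name × Expr τ Name FName)) :
      (Name → Option Value) → Expr τ Name FName → Value → Prop where
    | var {env x v} : env x = some v → CEval prog env (.var x) v
    | lett {env x a b u v} : CEval prog env a u →
        CEval prog (updEnv env x u) b v → CEval prog env (.lett x a b) v
    | call {env f args params body vals v} : prog f = some (params, body) →
        CEvalList prog env args vals →
        CEval prog (bindEnv params vals) body v →
        CEval prog env (.call f args) v
    | con {env T i args vals} : CEvalList prog env args vals →
        CEval prog env (.con T i args) (.mk i vals)
    | cases {env T d bs i ws pvs body v} : CEval prog env d (.mk i ws) →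
        bs[i - 1]? = some (pvs, body) →
        CEval prog (extEnv pvs ws env) body v →
        CEval prog env (.cases T d bs) v

  /-- Pointwise lifting of `CEval` to lists. -/
  inductive CEvalList {τ Name FName : Type} [DecidableEq Name]
      (prog : FName → Option (List Name × Expr τ Name FName)) :
      (Name → Option Value) → List (Expr τ Name FName) → List Value → Prop where
    | nil {env} : CEvalList prog env [] []
    | cons {env e v es vs} : CEval prog env e v → CEvalList prog env es vs →
        CEvalList prog env (e :: es) (v :: vs)
end

/- Strict big-step evaluation of abstract expressions with respect to an abstract
program `aprog`.  An abstract constructor application `C'` builds the abstract value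
with the constant flags representing the rank-`i` element of `S c` and the values of
the arguments; `amerge` evaluates the discriminant to `x`, each branch body with the
pattern variables bound to the arguments of `x` (a missing argument being the empty
abstract value), and merges the branch results according to the flags of `x`.
`AEvalList` is the pointwise lifting of `AEval` to lists, and
`AEvalBranches aprog env x bs rs` evaluates the branch bodies `bs` (each with its
pattern variables bound to the arguments of `x`) to the abstract values `rs`. -/
mutual
  /-- Big-step evaluation of abstract expressions. -/
  inductive AEval {Name FName V : Type} [DecidableEq Name]
      (aprog : FName → Option (List Name × AExpr Name FName V)) :
      (Name → Option (AVal V)) → AExpr Name FName V → AVal V → Prop where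
    | var {env x a} : env x = some a → AEval aprog env (.var x) a
    | lett {env x a b u w} : AEval aprog env a u →
        AEval aprog (updEnv env x u) b w → AEval aprog env (.lett x a b) w
    | call {env f args params body avals w} : aprog f = some (params, body) →
        AEvalList aprog env args avals →
        AEval aprog (bindEnv params avals) body w →
        AEval aprog env (.call f args) w
    | mkCon {env c i args avals} : AEvalList aprog env args avals →
        AEval aprog env (.mkCon c i args)
          (.mk ((strOf c i).map (fun b => fun _ => b)) avals)
    | amerge {env c d bs x rs} : AEval aprog env d x →
        AEvalBranches aprog env x bs rs →
        AEval aprog env (.amerge c d bs) (merge c x.flags rs)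

  /-- Pointwise lifting of `AEval` to lists. -/
  inductive AEvalList {Name FName V : Type} [DecidableEq Name]
      (aprog : FName → Option (List Name × AExpr Name FName V)) :
      (Name → Option (AVal V)) → List (AExpr Name FName V) → List (AVal V) → Prop where
    | nil {env} : AEvalList aprog env [] []
    | cons {env e a es as} : AEval aprog env e a → AEvalList aprog env es as →
        AEvalList aprog env (e :: es) (a :: as)

  /-- Evaluation of the branches of a compiled pattern match. -/
  inductive AEvalBranches {Name FName V : Type} [DecidableEq Name]
      (aprog : FName → Option (List Name × AExpr Name FName V)) :
      (Name → Option (AVal V)) → AVal V → List (List Name × AExpr Name FName V) →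
      List (AVal V) → Prop where
    | nil {env x} : AEvalBranches aprog env x [] []
    | cons {env x pvs body r bs rs} :
        AEval aprog
          (extEnv pvs
            ((List.range pvs.length).map (fun j => x.args.getD j (AVal.mk [] [])))
            env)
          body r →
        AEvalBranches aprog env x bs rs →
        AEvalBranches aprog env x ((pvs, body) :: bs) (r :: rs)
end

/-- Pointwise decoding of an abstract environment under a typing environment `Γ` and
an assignment `σ`. -/
def decodeEnv {τ Name V : Type} (sig : Signature τ) (Γ : Name → Option τ)
    (env : Name → Option (AVal V)) (σ : V → Bool) : Name → Option Value :=
  fun y => match Γ y, env y with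
    | some T, some a => decode sig T a σ
    | _, _ => none

/-- An input expression `p` of type `T` (its free variables typed by `Γ`) is
*compiled correctly* if for every abstract environment, every assignment `σ`, every
result `a` of abstract evaluation of `compile p` and every result `v` of concrete
evaluation of `p` in the decoded environment, decoding `a` at `T` under `σ` is
defined and yields `v` — i.e. `decode (avalue (e, compile p), σ) = cvalue (decode
(e, σ), p)`. -/
def CompiledCorrectly {τ Name FName V : Type} [DecidableEq Name]
    (sig : Signature τ) (prog : FName → Option (List Name × Expr τ Name FName))
    (aprog : FName → Option (List Name × AExpr Name FName V))
    (Γ : Name → Option τ) (p : Expr τ Name FName) (T : τ) : Prop :=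
  ∀ (env : Name → Option (AVal V)) (σ : V → Bool) (a : AVal V) (v : Value),
    AEval aprog env (compile sig p) a →
    CEval prog (decodeEnv sig Γ env σ) p v →
    decode sig T a σ = some v

/- Typing of input expressions, relative to function signatures `FSig` (argument
types and result type of each function) and a typing environment `Γ` for the free
variables.  `HasTypeList` is the pointwise lifting to lists of expressions. -/
mutual
  /-- Typing judgment for input expressions. -/
  inductive HasType {τ Name FName : Type} [DecidableEq Name] (sig : Signature τ)
      (FSig : FName → Option (List τ × τ)) :
      (Name → Option τ) → Expr τ Name FName → τ → Prop where
    | var {Γ x T} : Γ x = some T → HasType sig FSig Γ (.var x) T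
    | lett {Γ x a b S T} : HasType sig FSig Γ a S →
        HasType sig FSig (updEnv Γ x S) b T → HasType sig FSig Γ (.lett x a b) T
    | call {Γ f args argTys T} : FSig f = some (argTys, T) →
        HasTypeList sig FSig Γ args argTys → HasType sig FSig Γ (.call f args) T
    | con {Γ T i argTys args} : 1 ≤ i → (sig.ctors T)[i - 1]? = some argTys →
        HasTypeList sig FSig Γ args argTys → HasType sig FSig Γ (.con T i args) T
    | cases {Γ T U d bs} : HasType sig FSig Γ d T →
        bs.length = (sig.ctors T).length →
        (∀ (k : ℕ) (argTys : List τ) (pvs : List Name) (body : Expr τ Name FName),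
          (sig.ctors T)[k]? = some argTys → bs[k]? = some (pvs, body) →
          pvs.length = argTys.length) →
        (∀ (k : ℕ) (argTys : List τ) (pvs : List Name) (body : Expr τ Name FName),
          (sig.ctors T)[k]? = some argTys → bs[k]? = some (pvs, body) →
          HasType sig FSig (extEnv pvs argTys Γ) body U) →
        HasType sig FSig Γ (.cases T d bs) U

  /-- Pointwise lifting of `HasType` to lists of expressions. -/
  inductive HasTypeList {τ Name FName : Type} [DecidableEq Name] (sig : Signature τ)
      (FSig : FName → Option (List τ × τ)) :
      (Name → Option τ) → List (Expr τ Name FName) → List τ → Prop where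
    | nil {Γ} : HasTypeList sig FSig Γ [] []
    | cons {Γ e T es Ts} : HasType sig FSig Γ e T → HasTypeList sig FSig Γ es Ts →
        HasTypeList sig FSig Γ (e :: es) (T :: Ts)
end

/-! Induction on the concrete evaluation, following the abstract evaluation of the compiled
expression alongside it. Two facts carry the induction. Decoding `C'(a⃗)` gives `C(decode a⃗)`,
because `numeric c` inverts `strOf c`. Decoding `merge_c(f⃗, a_1, …, a_c)` under an assignment
at which `f⃗` selects branch `k` agrees with decoding `a_k`: the merged flags evaluate to those
of `a_k` padded with `true`s, `numeric` reads only a prefix lying in `S_c`, and the same holds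
argumentwise, by recursion on `a_k`. -/

@[simp] theorem AVal.flags_mk {V : Type} (fs : List ((V → Bool) → Bool)) (as : List (AVal V)) :
    (AVal.mk fs as).flags = fs := rfl

@[simp] theorem AVal.args_mk {V : Type} (fs : List ((V → Bool) → Bool)) (as : List (AVal V)) :
    (AVal.mk fs as).args = as := rfl

theorem numeric_of_prefix {n : ℕ} {w w' : List Bool} {i : ℕ} (hw : w <+: w')
    (h : numeric n w = some i) : numeric n w' = some i := by
  obtain ⟨t, rfl⟩ := hw
  induction n, w using numeric.induct generalizing i with
  | case1 => simp [numeric] at h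
  | case2 => simpa [numeric] using h
  | case3 => simp [numeric] at h
  | case4 n w ih => rw [numeric] at h; rw [List.cons_append, numeric]; exact ih h
  | case5 n w ih =>
    rw [numeric] at h
    obtain ⟨j, hj, rfl⟩ := Option.map_eq_some_iff.mp h
    rw [List.cons_append, numeric, ih hj]; rfl

theorem numeric_strOf {c i : ℕ} (h1 : 1 ≤ i) (h2 : i ≤ c) :
    numeric c (strOf c i) = some i := by
  induction c, i using strOf.induct with
  | case1 => omega
  | case2 => simp only [strOf, numeric, Option.some.injEq]; omega
  | case3 n i hi ih => rw [strOf, if_pos hi, numeric]; exact ih h1 hi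
  | case4 n i hi ih =>
    rw [strOf, if_neg hi, numeric, ih (by omega) (by omega), Option.map_some, Option.some.injEq]
    omega

section Merge

variable {V : Type} (c : ℕ) (fs : List ((V → Bool) → Bool)) (rs : List (AVal V))

theorem length_merge_args :
    (merge c fs rs).args.length = (rs.map (fun a => a.args.length)).foldr max 0 := by
  rw [merge]; simp

theorem eval_flags_prefix_merge {σ : V → Bool} {k : ℕ} {r : AVal V}
    (hk : numeric c (fs.map (fun f => f σ)) = some k) (hr : rs[k - 1]? = some r) :
    r.flags.map (fun f => f σ) <+: (merge c fs rs).flags.map (fun f => f σ) := by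
  have hle : r.flags.length ≤ (rs.map (fun a => a.flags.length)).foldr max 0 :=
    List.le_max_of_le' 0 (List.mem_map_of_mem (List.mem_of_getElem? hr)) le_rfl
  rw [List.prefix_iff_eq_take, merge]
  apply List.ext_getElem
  · simp only [AVal.flags_mk, List.length_map, List.length_take, List.length_range]; omega
  · intro i h1 h2
    simp only [List.length_map] at h1
    simp [hk, hr, List.getElem?_eq_getElem h1]

theorem merge_args_getD {j : ℕ} (hj : j < (rs.map (fun a => a.args.length)).foldr max 0) :
    (merge c fs rs).args.getD j (AVal.mk [] []) =
      merge c fs (rs.map (fun a => a.args.getD j (AVal.mk [] []))) := by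
  rw [merge]
  simp [List.getElem?_range hj]

end Merge

section Decode

variable {τ V : Type} {sig : Signature τ} {σ : V → Bool}

theorem decodeList_cons_cons_eq_some_iff {t : τ} {ts : List τ} {a : AVal V}
    {as : List (AVal V)} {vs : List Value} :
    decodeList sig (t :: ts) (a :: as) σ = some vs ↔
      ∃ v vs', decode sig t a σ = some v ∧ decodeList sig ts as σ = some vs' ∧
        vs = v :: vs' := by
  rw [decodeList]
  cases decode sig t a σ <;> simp [eq_comm]

theorem length_le_of_decodeList_eq_some {Ts : List τ} {as : List (AVal V)} {vs : List Value}
    (h : decodeList sig Ts as σ = some vs) : Ts.length ≤ as.length := by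
  induction Ts generalizing as vs with
  | nil => simp
  | cons t ts ih =>
    cases as with
    | nil => simp [decodeList] at h
    | cons a as =>
      obtain ⟨_, _, -, h', -⟩ := decodeList_cons_cons_eq_some_iff.mp h
      simpa using ih h'

theorem decodeList_eq_some_of_decode_imp {Ts : List τ} {as as' : List (AVal V)}
    {vs : List Value} (h : decodeList sig Ts as σ = some vs) (hlen : Ts.length ≤ as'.length)
    (himp : ∀ i T v, Ts[i]? = some T → decode sig T (as.getD i (AVal.mk [] [])) σ = some v →
      decode sig T (as'.getD i (AVal.mk [] [])) σ = some v) :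
    decodeList sig Ts as' σ = some vs := by
  induction Ts generalizing as as' vs with
  | nil => simpa [decodeList] using h
  | cons t ts ih =>
    obtain _ | ⟨a, as⟩ := as
    · simp [decodeList] at h
    obtain _ | ⟨a', as'⟩ := as'
    · simp at hlen
    obtain ⟨v, vs', hv, hvs', rfl⟩ := decodeList_cons_cons_eq_some_iff.mp h
    refine decodeList_cons_cons_eq_some_iff.mpr
      ⟨v, vs', by simpa using himp 0 t v rfl (by simpa using hv), ?_, rfl⟩
    exact ih hvs' (by simpa using hlen) fun i T => by simpa using himp (i + 1) T

theorem decode_eq_some_iff {T : τ} {a : AVal V} {v : Value} :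
    decode sig T a σ = some v ↔
      ∃ i argTys vals, numeric (sig.ctors T).length (a.flags.map (fun f => f σ)) = some i ∧
        (sig.ctors T)[i - 1]? = some argTys ∧ decodeList sig argTys a.args σ = some vals ∧
        v = Value.mk i vals := by
  obtain ⟨fs, as⟩ := a
  rw [decode]
  constructor
  · intro h
    split at h
    · simp at h
    rename_i i hi
    split at h
    · simp at h
    rename_i argTys hargs
    split_ifs at h
    obtain ⟨vals, hvals, rfl⟩ := Option.map_eq_some_iff.mp h
    exact ⟨i, argTys, vals, hi, hargs, hvals, rfl⟩
  · rintro ⟨i, argTys, vals, hi, hargs, hvals, rfl⟩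
    simp only [AVal.flags_mk, AVal.args_mk] at hi hvals
    simp [hi, hargs, hvals, length_le_of_decodeList_eq_some hvals]

theorem decode_mk_strOf {T : τ} {i : ℕ} {argTys : List τ} {avals : List (AVal V)}
    {vals : List Value} (hi : 1 ≤ i) (hargs : (sig.ctors T)[i - 1]? = some argTys)
    (hvals : decodeList sig argTys avals σ = some vals) :
    decode sig T (AVal.mk ((strOf (sig.ctors T).length i).map (fun b _ => b)) avals) σ =
      some (Value.mk i vals) := by
  have hic : i ≤ (sig.ctors T).length := by
    have := (List.getElem?_eq_some_iff.mp hargs).1; omega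
  refine decode_eq_some_iff.mpr ⟨i, argTys, vals, ?_, hargs, hvals, rfl⟩
  simpa [Function.comp_def] using numeric_strOf hi hic

theorem decode_merge_of_decode {c : ℕ} {fs : List ((V → Bool) → Bool)} {rs : List (AVal V)}
    {k : ℕ} {r : AVal V} {U : τ} {v : Value} (hk : numeric c (fs.map (fun f => f σ)) = some k)
    (hr : rs[k - 1]? = some r) (h : decode sig U r σ = some v) :
    decode sig U (merge c fs rs) σ = some v := by
  obtain ⟨i, argTys, vals, hi, hargs, hvals, rfl⟩ := decode_eq_some_iff.mp h
  have hmax : r.args.length ≤ (rs.map (fun a => a.args.length)).foldr max 0 :=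
    List.le_max_of_le' 0 (List.mem_map_of_mem (List.mem_of_getElem? hr)) le_rfl
  have hlen := length_le_of_decodeList_eq_some hvals
  refine decode_eq_some_iff.mpr ⟨i, argTys, vals,
    numeric_of_prefix (eval_flags_prefix_merge c fs rs hk hr) hi, hargs, ?_, rfl⟩
  refine decodeList_eq_some_of_decode_imp hvals (by rw [length_merge_args]; omega)
    fun j T w hT hw => ?_
  have hj : j < r.args.length := (List.getElem?_eq_some_iff.mp hT).1.trans_le hlen
  rw [merge_args_getD c fs rs (by omega)]
  exact decode_merge_of_decode hk (by simp [hr]) hw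
termination_by sizeOf r
decreasing_by exact AVal.sizeOf_getD_lt r j hj

theorem decodeList_range_map_args_getD {Ts : List τ} {x : AVal V} {vs : List Value} {n : ℕ}
    (hn : n = Ts.length) (h : decodeList sig Ts x.args σ = some vs) :
    decodeList sig Ts ((List.range n).map (fun j => x.args.getD j (AVal.mk [] []))) σ =
      some vs := by
  refine decodeList_eq_some_of_decode_imp h (by simp [hn]) fun j T w hT hw => ?_
  have hj : j < n := hn ▸ (List.getElem?_eq_some_iff.mp hT).1
  simpa [List.getD_eq_getElem?_getD, List.getElem?_range hj] using hw

end Decode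

section Env

variable {Name : Type} [DecidableEq Name]

theorem extEnv_nil {β : Type} (ws : List β) (env : Name → Option β) :
    extEnv [] ws env = env := by
  funext y; simp [extEnv, bindEnv]

theorem extEnv_cons {β : Type} (x : Name) (xs : List Name) (w : β) (ws : List β)
    (env : Name → Option β) :
    extEnv (x :: xs) (w :: ws) env = updEnv (extEnv xs ws env) x w := by
  funext y; by_cases hy : y = x <;> simp [extEnv, updEnv, bindEnv, hy]

theorem bindEnv_eq_extEnv {β : Type} (xs : List Name) (ws : List β) :
    bindEnv xs ws = extEnv xs ws (fun _ => none) := by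
  funext y; simp only [extEnv]; split <;> simp_all

variable {τ V : Type} {sig : Signature τ} {σ : V → Bool}

theorem decodeEnv_updEnv {Γ : Name → Option τ} {env : Name → Option (AVal V)} {x : Name}
    {S : τ} {a : AVal V} {u : Value} (h : decode sig S a σ = some u) :
    decodeEnv sig (updEnv Γ x S) (updEnv env x a) σ = updEnv (decodeEnv sig Γ env σ) x u := by
  funext y; by_cases hy : y = x <;> simp [decodeEnv, updEnv, hy, h]

theorem decodeEnv_extEnv {Γ : Name → Option τ} {env : Name → Option (AVal V)} {xs : List Name}
    {Ts : List τ} {as : List (AVal V)} {vs : List Value} (hlen : xs.length = Ts.length)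
    (h : decodeList sig Ts as σ = some vs) :
    decodeEnv sig (extEnv xs Ts Γ) (extEnv xs as env) σ =
      extEnv xs vs (decodeEnv sig Γ env σ) := by
  induction xs generalizing Ts as vs with
  | nil => simp only [extEnv_nil]
  | cons x xs ih =>
    obtain _ | ⟨t, Ts⟩ := Ts
    · simp at hlen
    obtain _ | ⟨a, as⟩ := as
    · simp [decodeList] at h
    obtain ⟨v, vs, hv, hvs, rfl⟩ := decodeList_cons_cons_eq_some_iff.mp h
    simp only [extEnv_cons, decodeEnv_updEnv hv, ih (by simpa using hlen) hvs]

theorem decodeEnv_bindEnv {xs : List Name} {Ts : List τ} {as : List (AVal V)}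
    {vs : List Value} (hlen : xs.length = Ts.length) (h : decodeList sig Ts as σ = some vs) :
    decodeEnv sig (bindEnv xs Ts) (bindEnv xs as) σ = bindEnv xs vs := by
  simp only [bindEnv_eq_extEnv, decodeEnv_extEnv hlen h]
  rfl

end Env

theorem AEvalBranches.exists_of_getElem? {Name FName V : Type} [DecidableEq Name]
    {aprog : FName → Option (List Name × AExpr Name FName V)} {env : Name → Option (AVal V)}
    {x : AVal V} {bs : List (List Name × AExpr Name FName V)} {rs : List (AVal V)}
    (h : AEvalBranches aprog env x bs rs) {k : ℕ} {pvs : List Name} {body : AExpr Name FName V}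
    (hk : bs[k]? = some (pvs, body)) :
    ∃ r, rs[k]? = some r ∧
      AEval aprog
        (extEnv pvs ((List.range pvs.length).map (fun j => x.args.getD j (AVal.mk [] []))) env)
        body r :=
  match h, k, hk with
  | .cons hbody _, 0, hk => by
    obtain ⟨rfl, rfl⟩ := Prod.mk.inj (Option.some.inj hk)
    exact ⟨_, rfl, hbody⟩
  | .cons _ hbs, k + 1, hk => by simpa using hbs.exists_of_getElem? (by simpa using hk)

theorem compile_cases {τ Name FName V : Type} (sig : Signature τ) (T : τ)
    (d : Expr τ Name FName) (bs : List (List Name × Expr τ Name FName)) :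
    (compile sig (.cases T d bs) : AExpr Name FName V) =
      .amerge (sig.ctors T).length (compile sig d) (bs.map fun b => (b.1, compile sig b.2)) := by
  rw [compile]
  exact congrArg _ (List.attach_map_val (l := bs) (f := fun b => (b.1, compile sig b.2)))

section Soundness

variable {τ Name FName V : Type} [DecidableEq Name] {sig : Signature τ}
  {prog : FName → Option (List Name × Expr τ Name FName)}
  {aprog : FName → Option (List Name × AExpr Name FName V)}
  {FSig : FName → Option (List τ × τ)}

mutual

/- The environment equation `henv` is kept as a hypothesis, never substituted, so that the
recursive calls are on subderivations of `hcev` itself (structural recursion). -/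
theorem decode_eq_of_cEval
    (haprog : ∀ f params body, prog f = some (params, body) →
      aprog f = some (params, compile sig body))
    (hwf : ∀ f params body, prog f = some (params, body) →
      ∃ argTys T, FSig f = some (argTys, T) ∧ params.length = argTys.length ∧
        HasType sig FSig (bindEnv params argTys) body T)
    {cenv : Name → Option Value} {p : Expr τ Name FName} {v : Value}
    (hcev : CEval prog cenv p v) {Γ : Name → Option τ} {T : τ} {env : Name → Option (AVal V)}
    {σ : V → Bool} {a : AVal V} (hty : HasType sig FSig Γ p T)
    (henv : cenv = decodeEnv sig Γ env σ) (haev : AEval aprog env (compile sig p) a) :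
    decode sig T a σ = some v :=
  match hcev with
  | .var hx => by
    rw [compile] at haev
    cases hty with | var hΓ => ?_
    cases haev with | var ha => ?_
    simpa [henv, decodeEnv, hΓ, ha] using hx
  | .lett hu hv => by
    rw [compile] at haev
    cases hty with | lett htyu htyv => ?_
    cases haev with | lett hau hav => ?_
    have hdu := decode_eq_of_cEval haprog hwf hu htyu henv hau
    exact decode_eq_of_cEval haprog hwf hv htyv (by rw [decodeEnv_updEnv hdu, henv]) hav
  | .call hf hargs hbody => by
    rw [compile, List.attach_map_val] at haev
    cases hty with | call hFSig htyargs => ?_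
    cases haev with | call haf haargs habody => ?_
    obtain ⟨rfl, rfl⟩ := Prod.mk.inj (Option.some.inj ((haprog _ _ _ hf).symm.trans haf))
    obtain ⟨argTys, T', hFSig', hlen, htybody⟩ := hwf _ _ _ hf
    obtain ⟨rfl, rfl⟩ := Prod.mk.inj (Option.some.inj (hFSig.symm.trans hFSig'))
    have hvals := decodeList_eq_of_cEvalList haprog hwf hargs htyargs henv haargs
    exact decode_eq_of_cEval haprog hwf hbody htybody (decodeEnv_bindEnv hlen hvals).symm habody
  | .con hargs => by
    rw [compile, List.attach_map_val] at haev
    cases hty with | con hi hct htyargs => ?_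
    cases haev with | mkCon haargs => ?_
    exact decode_mk_strOf hi hct
      (decodeList_eq_of_cEvalList haprog hwf hargs htyargs henv haargs)
  | .cases (i := i) hd hbs hbody => by
    rw [compile_cases] at haev
    cases hty with | cases htyd _ hplen htybs => ?_
    cases haev with | amerge hx hbr => ?_
    obtain ⟨i, argTys, ws, hnum, hct, hws, heq⟩ :=
      decode_eq_some_iff.mp (decode_eq_of_cEval haprog hwf hd htyd henv hx)
    obtain ⟨rfl, rfl⟩ := Value.mk.inj heq
    have hlen := hplen _ _ _ _ hct hbs
    obtain ⟨r, hr, habody⟩ :=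
      hbr.exists_of_getElem? (k := i - 1) (by rw [List.getElem?_map, hbs]; rfl)
    refine decode_merge_of_decode hnum hr
      (decode_eq_of_cEval haprog hwf hbody (htybs _ _ _ _ hct hbs) ?_ habody)
    rw [decodeEnv_extEnv (by simpa using hlen) (decodeList_range_map_args_getD hlen hws), henv]
termination_by structural hcev

theorem decodeList_eq_of_cEvalList
    (haprog : ∀ f params body, prog f = some (params, body) →
      aprog f = some (params, compile sig body))
    (hwf : ∀ f params body, prog f = some (params, body) →
      ∃ argTys T, FSig f = some (argTys, T) ∧ params.length = argTys.length ∧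
        HasType sig FSig (bindEnv params argTys) body T)
    {cenv : Name → Option Value} {ps : List (Expr τ Name FName)} {vs : List Value}
    (hcev : CEvalList prog cenv ps vs) {Γ : Name → Option τ} {Ts : List τ}
    {env : Name → Option (AVal V)} {σ : V → Bool} {as : List (AVal V)}
    (hty : HasTypeList sig FSig Γ ps Ts) (henv : cenv = decodeEnv sig Γ env σ)
    (haev : AEvalList aprog env (ps.map (compile sig)) as) :
    decodeList sig Ts as σ = some vs :=
  match hcev with
  | .nil => by
    cases hty; cases haev; rw [decodeList]
  | .cons hv hvs => by
    cases hty with | cons htyv htyvs => ?_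
    cases haev with | cons hav havs => ?_
    exact decodeList_cons_cons_eq_some_iff.mpr
      ⟨_, _, decode_eq_of_cEval haprog hwf hv htyv henv hav,
        decodeList_eq_of_cEvalList haprog hwf hvs htyvs henv havs, rfl⟩
termination_by structural hcev

end

end Soundness

/-- Overall correctness of compilation: in a program over finite algebraic data
types, all of whose functions are total and well-typed, and whose abstract version
assigns to each function the compilation of its body, every well-typed expression
`p` of the input language is compiled correctly, i.e. for every abstract environment
`env` and every assignment `σ`:
`decode (avalue (env, compile p), σ) = cvalue (decode (env, σ), p)`. -/
theorem compile_correct {τ Name FName V : Type} [DecidableEq Name]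
    (sig : Signature τ) (prog : FName → Option (List Name × Expr τ Name FName))
    (aprog : FName → Option (List Name × AExpr Name FName V))
    (FSig : FName → Option (List τ × τ))
    -- the abstract program is obtained by compiling the concrete program
    (haprog : ∀ f params body, prog f = some (params, body) →
      aprog f = some (params, compile sig body))
    -- every function of the program is well-typed at its signature
    (hwf : ∀ f params body, prog f = some (params, body) →
      ∃ argTys T, FSig f = some (argTys, T) ∧ params.length = argTys.length ∧
        HasType sig FSig (bindEnv params argTys) body T)
    -- all data types are finite
    (hfin : ∀ T : τ, {v : Value | WT sig T v}.Finite)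
    -- all functions are total: well-typed expressions evaluate in well-typed
    -- environments
    (htotal : ∀ (Γ : Name → Option τ) (p : Expr τ Name FName) (T : τ)
        (env : Name → Option Value), HasType sig FSig Γ p T →
        (∀ x S, Γ x = some S → ∃ v, env x = some v ∧ WT sig S v) →
        ∃ v, CEval prog env p v) :
    ∀ (Γ : Name → Option τ) (p : Expr τ Name FName) (T : τ),
      HasType sig FSig Γ p T → CompiledCorrectly sig prog aprog Γ p T :=
  fun _ _ _ hty _ _ _ _ haev hcev => decode_eq_of_cEval haprog hwf hcev hty rfl haev
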